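/- Let Q be a finite-dimensional real vector space, H : [0,T] × Q × Q* → ℝ a C¹ Hamiltonian, q₀ ∈ Q, p₁ ∈ Q*, and (q,p) a C¹ curve with q(0) = q₀. Then the Type II d'Alembert variational principle — namely δS[q,p] = ⟨p₁, δq(T)⟩ for all C¹ partial variations (δq,δp) with δq(0) = 0, where S[q,p] = ∫₀ᵀ (⟨p, q̇⟩ − H(t,q,p)) dt — holds if and only if q̇ = D_p H, ṗ = −D_q H on (0,T) and p(T) = p₁. -/

import Mathlib

/-! Differentiating under the integral sign and integrating `⟨p, δq̇⟩` by parts gives the first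
variation
`δS = ∫₀ᵀ (⟨q̇ - ∂ₚH, δp⟩ - ⟨ṗ + ∂_qH, δq⟩) dt + ⟨p(T), δq(T)⟩ - ⟨p(0), δq(0)⟩`.
Variations `δp = φ eᵢ` and `δq = φ eᵢ` with `φ` supported in `(0,T)` yield Hamilton's equations by
the fundamental lemma of the calculus of variations; once the integral vanishes, `δq(t) = t eᵢ`
leaves `T pᵢ(T) = T (p₁)ᵢ`, the natural boundary condition. -/

open Set

/-- The classical Hamiltonian phase space action
`S[q,p] = ∫₀ᵀ (⟨p(t), q̇(t)⟩ − H(t,q(t),p(t))) dt`. -/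
noncomputable def classicalAction (n : ℕ) (T : ℝ)
    (H : ℝ → (Fin n → ℝ) → (Fin n → ℝ) → ℝ) (q p : ℝ → (Fin n → ℝ)) : ℝ :=
  ∫ t in (0 : ℝ)..T, ((∑ i, p t i * deriv q t i) - H t (q t) (p t))

open MeasureTheory

theorem HasDerivAt.dotProduct {𝕜 ι : Type*} [NontriviallyNormedField 𝕜] [Fintype ι]
    {f g : 𝕜 → ι → 𝕜} {f' g' : ι → 𝕜} {x : 𝕜}
    (hf : HasDerivAt f f' x) (hg : HasDerivAt g g' x) :
    HasDerivAt (fun y => f y ⬝ᵥ g y) (f' ⬝ᵥ g x + f x ⬝ᵥ g') x := by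
  unfold _root_.dotProduct
  rw [← Finset.sum_add_distrib]
  exact HasDerivAt.fun_sum fun i _ => (hasDerivAt_pi.1 hf i).mul (hasDerivAt_pi.1 hg i)

theorem dotProduct_apply_single_one {R ι M : Type*} [Fintype ι] [DecidableEq ι]
    [CommSemiring R] [FunLike M (ι → R) R] [LinearMapClass M R (ι → R) R] (L : M) (v : ι → R) :
    (fun i => L (Pi.single i 1)) ⬝ᵥ v = L v := by
  conv_rhs => rw [pi_eq_sum_univ' v]
  simp [dotProduct, mul_comm]

theorem hasDerivAt_intervalIntegral_of_continuous {E : Type*} [NormedAddCommGroup E]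
    [NormedSpace ℝ E] {F F' : ℝ → ℝ → E} {a b x₀ : ℝ}
    (hF : Continuous (Function.uncurry F)) (hF' : Continuous (Function.uncurry F'))
    (hderiv : ∀ x t, HasDerivAt (fun y => F y t) (F' x t) x) :
    HasDerivAt (fun x => ∫ t in a..b, F x t) (∫ t in a..b, F' x₀ t) x₀ := by
  obtain ⟨C, hC⟩ := ((isCompact_closedBall x₀ 1).prod (isCompact_uIcc (a := a) (b := b))
    ).exists_bound_of_continuousOn hF'.continuousOn
  refine (intervalIntegral.hasDerivAt_integral_of_dominated_loc_of_deriv_le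
    (bound := fun _ => C) (Metric.closedBall_mem_nhds x₀ one_pos)
    (.of_forall fun x => (hF.comp (Continuous.prodMk_right x)).aestronglyMeasurable)
    ((hF.comp (Continuous.prodMk_right x₀)).intervalIntegrable _ _)
    (hF'.comp (Continuous.prodMk_right x₀)).aestronglyMeasurable
    (.of_forall fun t ht x hx => hC (x, t) ⟨hx, uIoc_subset_uIcc ht⟩)
    intervalIntegrable_const
    (.of_forall fun t _ x _ => hderiv x t)).2

theorem eqOn_zero_of_forall_intervalIntegral_mul_eq_zero {f : ℝ → ℝ} {a b : ℝ}
    (hf : Continuous f)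
    (h : ∀ φ : ℝ → ℝ, ContDiff ℝ 1 φ → (∀ t ∉ Ioo a b, φ t = 0) →
      ∫ t in a..b, φ t * f t = 0) :
    EqOn f 0 (Ioo a b) := by
  rcases le_or_gt b a with hba | hab
  · simp [Ioo_eq_empty_of_le hba]
  refine Measure.eqOn_open_of_ae_eq (μ := volume) ?_ isOpen_Ioo hf.continuousOn continuousOn_const
  rw [Filter.EventuallyEq, ae_restrict_iff' measurableSet_Ioo]
  refine isOpen_Ioo.ae_eq_zero_of_integral_contDiff_smul_eq_zero
    (hf.locallyIntegrable.locallyIntegrableOn _) fun g hg _ hgU => ?_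
  have hg0 : ∀ t ∉ Ioo a b, g t = 0 := fun t ht => image_eq_zero_of_notMem_tsupport (hgU.mt ht)
  rw [← h g (hg.of_le (by simp)) hg0, intervalIntegral.integral_of_le hab.le,
    setIntegral_eq_integral_of_forall_compl_eq_zero fun t ht => ?_]
  · rfl
  · rw [hg0 t (fun h => ht (Ioo_subset_Ioc_self h)), zero_mul]

theorem intervalIntegral_eq_zero_of_eqOn_Ioo {E : Type*} [NormedAddCommGroup E]
    [NormedSpace ℝ E] {f : ℝ → E} {a b : ℝ} (hab : a ≤ b) (h : EqOn f 0 (Ioo a b)) :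
    ∫ t in a..b, f t = 0 := by
  rw [intervalIntegral.integral_of_le hab, integral_Ioc_eq_integral_Ioo,
    setIntegral_congr_fun measurableSet_Ioo h]
  simp

theorem eqOn_zero_and_eq_of_forall_variation {ι : Type*} [Fintype ι] [DecidableEq ι] {T : ℝ}
    (hT : 0 < T) {a b : ℝ → ι → ℝ} {c p₁ : ι → ℝ} (ha : Continuous a) (hb : Continuous b)
    (h : ∀ δq δp : ℝ → ι → ℝ, ContDiff ℝ 1 δq → ContDiff ℝ 1 δp → δq 0 = 0 →
      (∫ t in (0 : ℝ)..T, (a t ⬝ᵥ δp t - b t ⬝ᵥ δq t)) + c ⬝ᵥ δq T = p₁ ⬝ᵥ δq T) :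
    EqOn a 0 (Ioo 0 T) ∧ EqOn b 0 (Ioo 0 T) ∧ c = p₁ := by
  have ha0 : EqOn a 0 (Ioo 0 T) := fun t ht => funext fun i =>
    eqOn_zero_of_forall_intervalIntegral_mul_eq_zero ((continuous_apply i).comp ha)
      (fun φ hφ _ => by
        simpa using h 0 (fun t => φ t • Pi.single i 1) contDiff_const
          (hφ.smul contDiff_const) rfl) ht
  have hb0 : EqOn b 0 (Ioo 0 T) := fun t ht => funext fun i =>
    eqOn_zero_of_forall_intervalIntegral_mul_eq_zero ((continuous_apply i).comp hb)
      (fun φ hφ hφ0 => by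
        simpa [hφ0 T] using h (fun t => φ t • Pi.single i 1) 0
          (hφ.smul contDiff_const) contDiff_const (by simp [hφ0 0])) ht
  refine ⟨ha0, hb0, funext fun i => ?_⟩
  have hline := h (fun t => t • Pi.single i 1) 0 (contDiff_id.smul contDiff_const)
    contDiff_const (zero_smul _ _)
  rw [intervalIntegral_eq_zero_of_eqOn_Ioo hT.le fun t ht => by simp [hb0 ht]] at hline
  simpa [hT.ne'] using hline

section Slice

variable {𝕜 E F G W : Type*} [NontriviallyNormedField 𝕜]
  [NormedAddCommGroup E] [NormedSpace 𝕜 E] [NormedAddCommGroup F] [NormedSpace 𝕜 F] [NormedAddCommGroup G] [NormedSpace 𝕜 G]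
  [NormedAddCommGroup W] [NormedSpace 𝕜 W] {f : E × F × G → W} {a : E} {b : F} {c : G}

theorem fderiv_slice_mid_apply (hf : DifferentiableAt 𝕜 f (a, b, c)) (v : F) :
    fderiv 𝕜 (fun y => f (a, y, c)) b v = fderiv 𝕜 f (a, b, c) (0, v, 0) := by
  have hslice : HasFDerivAt (fun y => ((a, y, c) : E × F × G))
      ((ContinuousLinearMap.inr 𝕜 E (F × G)).comp (ContinuousLinearMap.inl 𝕜 F G)) b :=
    (hasFDerivAt_prodMk_right a (b, c)).comp b (hasFDerivAt_prodMk_left b c)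
  exact congrArg (· v) (hf.hasFDerivAt.comp b hslice).fderiv

theorem fderiv_slice_right_apply (hf : DifferentiableAt 𝕜 f (a, b, c)) (w : G) :
    fderiv 𝕜 (fun z => f (a, b, z)) c w = fderiv 𝕜 f (a, b, c) (0, 0, w) := by
  have hslice : HasFDerivAt (fun z => ((a, b, z) : E × F × G))
      ((ContinuousLinearMap.inr 𝕜 E (F × G)).comp (ContinuousLinearMap.inr 𝕜 F G)) c :=
    (hasFDerivAt_prodMk_right a (b, c)).comp c (hasFDerivAt_prodMk_right b c)
  exact congrArg (· w) (hf.hasFDerivAt.comp c hslice).fderiv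

end Slice

section Hamiltonian

variable {n : ℕ} (H : ℝ → (Fin n → ℝ) → (Fin n → ℝ) → ℝ)

noncomputable def gradQ (t : ℝ) (x y : Fin n → ℝ) : Fin n → ℝ :=
  fun i => fderiv ℝ (fun q' => H t q' y) x (Pi.single i 1)

noncomputable def gradP (t : ℝ) (x y : Fin n → ℝ) : Fin n → ℝ :=
  fun i => fderiv ℝ (fun p' => H t x p') y (Pi.single i 1)

variable {H}

theorem fderiv_uncurry_apply_eq_gradQ_add_gradP {t : ℝ} {x y : Fin n → ℝ}
    (hH : DifferentiableAt ℝ (fun z : ℝ × (Fin n → ℝ) × (Fin n → ℝ) => H z.1 z.2.1 z.2.2)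
      (t, x, y)) (u v : Fin n → ℝ) :
    fderiv ℝ (fun z : ℝ × (Fin n → ℝ) × (Fin n → ℝ) => H z.1 z.2.1 z.2.2) (t, x, y) (0, u, v)
      = gradQ H t x y ⬝ᵥ u + gradP H t x y ⬝ᵥ v := by
  have hsplit : ((0 : ℝ), u, v) = (0, u, 0) + (0, 0, v) := by simp
  rw [hsplit, map_add, ← fderiv_slice_mid_apply hH, ← fderiv_slice_right_apply hH]
  exact congr_arg₂ (· + ·) (dotProduct_apply_single_one _ u).symm
    (dotProduct_apply_single_one _ v).symm

variable {q p : ℝ → Fin n → ℝ}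
  (hH : ContDiff ℝ 1 (fun z : ℝ × (Fin n → ℝ) × (Fin n → ℝ) => H z.1 z.2.1 z.2.2))
include hH

theorem continuous_gradQ (hq : Continuous q) (hp : Continuous p) :
    Continuous fun t => gradQ H t (q t) (p t) := by
  refine continuous_pi fun i => ?_
  simp only [gradQ, fderiv_slice_mid_apply (hH.differentiable one_ne_zero _)]
  exact ((hH.continuous_fderiv one_ne_zero).comp (continuous_id.prodMk (hq.prodMk hp))).clm_apply
    continuous_const

theorem continuous_gradP (hq : Continuous q) (hp : Continuous p) :
    Continuous fun t => gradP H t (q t) (p t) := by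
  refine continuous_pi fun i => ?_
  simp only [gradP, fderiv_slice_right_apply (hH.differentiable one_ne_zero _)]
  exact ((hH.continuous_fderiv one_ne_zero).comp (continuous_id.prodMk (hq.prodMk hp))).clm_apply
    continuous_const

variable {δq δp : ℝ → Fin n → ℝ} (hq : ContDiff ℝ 1 q) (hp : ContDiff ℝ 1 p)
  (hδq : ContDiff ℝ 1 δq) (hδp : ContDiff ℝ 1 δp)
include hq hp hδq hδp

theorem hasDerivAt_classicalAction_add_smul (T : ℝ) :
    HasDerivAt (fun ε : ℝ =>
        classicalAction n T H (fun t => q t + ε • δq t) (fun t => p t + ε • δp t))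
      (∫ t in (0 : ℝ)..T, (δp t ⬝ᵥ deriv q t + p t ⬝ᵥ deriv δq t
        - fderiv ℝ (fun z : ℝ × (Fin n → ℝ) × (Fin n → ℝ) => H z.1 z.2.1 z.2.2) (t, q t, p t)
          (0, δq t, δp t))) 0 := by
  have hline : ∀ (u v : Fin n → ℝ) (ε : ℝ), HasDerivAt (fun e : ℝ => u + e • v) v ε :=
    fun u v ε => by simpa using ((hasDerivAt_id ε).smul_const v).const_add u
  have hdq : ∀ ε t : ℝ, deriv (fun s => q s + ε • δq s) t = deriv q t + ε • deriv δq t :=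
    fun ε t => ((hq.differentiable one_ne_zero t).hasDerivAt.fun_add
      ((hδq.differentiable one_ne_zero t).hasDerivAt.fun_const_smul ε)).deriv
  have := hq.continuous; have := hp.continuous; have := hδq.continuous; have := hδp.continuous
  have := hq.continuous_deriv le_rfl; have := hδq.continuous_deriv le_rfl
  have := hH.continuous; have := hH.continuous_fderiv one_ne_zero
  have hleibniz := hasDerivAt_intervalIntegral_of_continuous (a := 0) (b := T) (x₀ := 0)
    (F := fun ε t => (p t + ε • δp t) ⬝ᵥ (deriv q t + ε • deriv δq t)
      - H t (q t + ε • δq t) (p t + ε • δp t))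
    (F' := fun ε t => δp t ⬝ᵥ (deriv q t + ε • deriv δq t) + (p t + ε • δp t) ⬝ᵥ deriv δq t
      - fderiv ℝ (fun z : ℝ × (Fin n → ℝ) × (Fin n → ℝ) => H z.1 z.2.1 z.2.2)
          (t, q t + ε • δq t, p t + ε • δp t) (0, δq t, δp t))
    (by fun_prop) (by fun_prop) (fun ε t => ?_)
  · simpa [classicalAction, hdq, dotProduct] using hleibniz
  · exact ((hline _ _ ε).dotProduct (hline _ _ ε)).sub
      ((hH.differentiable one_ne_zero _).hasFDerivAt.comp_hasDerivAt ε
        ((hasDerivAt_const ε t).prodMk ((hline _ _ ε).prodMk (hline _ _ ε))))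

theorem hasDerivAt_classicalAction_variation (T : ℝ) :
    HasDerivAt (fun ε : ℝ =>
        classicalAction n T H (fun t => q t + ε • δq t) (fun t => p t + ε • δp t))
      ((∫ t in (0 : ℝ)..T, ((deriv q t - gradP H t (q t) (p t)) ⬝ᵥ δp t
          - (deriv p t + gradQ H t (q t) (p t)) ⬝ᵥ δq t))
        + (p T ⬝ᵥ δq T - p 0 ⬝ᵥ δq 0)) 0 := by
  convert hasDerivAt_classicalAction_add_smul hH hq hp hδq hδp T using 1
  have := hp.continuous; have := hδq.continuous; have := hδp.continuous
  have := hq.continuous_deriv le_rfl; have := hp.continuous_deriv le_rfl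
  have := hδq.continuous_deriv le_rfl
  have := continuous_gradQ hH hq.continuous hp.continuous
  have := continuous_gradP hH hq.continuous hp.continuous
  have hibp : ∫ t in (0 : ℝ)..T, (deriv p t ⬝ᵥ δq t + p t ⬝ᵥ deriv δq t)
      = p T ⬝ᵥ δq T - p 0 ⬝ᵥ δq 0 :=
    intervalIntegral.integral_eq_sub_of_hasDerivAt
      (fun t _ => (hp.differentiable one_ne_zero t).hasDerivAt.dotProduct
        (hδq.differentiable one_ne_zero t).hasDerivAt)
      ((by fun_prop : Continuous _).intervalIntegrable _ _)
  rw [← hibp, ← intervalIntegral.integral_add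
    ((by fun_prop : Continuous _).intervalIntegrable _ _)
    ((by fun_prop : Continuous _).intervalIntegrable _ _)]
  refine intervalIntegral.integral_congr fun t _ => ?_
  rw [fderiv_uncurry_apply_eq_gradQ_add_gradP (hH.differentiable one_ne_zero _)]
  simp only [sub_dotProduct, add_dotProduct, dotProduct_comm (δp t)]
  ring

end Hamiltonian

theorem typeII_dAlembert_variational_principle_general
    (n : ℕ) (T : ℝ) (hT : 0 < T)
    (H : ℝ → (Fin n → ℝ) → (Fin n → ℝ) → ℝ)
    (hH : ContDiff ℝ 1 (fun x : ℝ × (Fin n → ℝ) × (Fin n → ℝ) => H x.1 x.2.1 x.2.2))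
    (q p : ℝ → (Fin n → ℝ)) (hq : ContDiff ℝ 1 q) (hp : ContDiff ℝ 1 p)
    (p₁ : Fin n → ℝ) :
    (∀ δq δp : ℝ → (Fin n → ℝ), ContDiff ℝ 1 δq → ContDiff ℝ 1 δp → δq 0 = 0 →
        deriv (fun ε : ℝ =>
            classicalAction n T H (fun t => q t + ε • δq t) (fun t => p t + ε • δp t)) 0
          = ∑ i, p₁ i * δq T i)
    ↔ ((∀ t ∈ Ioo (0 : ℝ) T,
          deriv q t = (fun i => fderiv ℝ (fun p' => H t (q t) p') (p t) (Pi.single i 1)) ∧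
          deriv p t = (fun i => -fderiv ℝ (fun q' => H t q' (p t)) (q t) (Pi.single i 1)))
        ∧ p T = p₁) := by
  have hδS := fun δq δp (hδq : ContDiff ℝ 1 δq) (hδp : ContDiff ℝ 1 δp) =>
    (hasDerivAt_classicalAction_variation hH hq hp hδq hδp T).deriv
  have hcQ : Continuous fun t => deriv q t - gradP H t (q t) (p t) :=
    (hq.continuous_deriv le_rfl).sub (continuous_gradP hH hq.continuous hp.continuous)
  have hcP : Continuous fun t => deriv p t + gradQ H t (q t) (p t) :=
    (hp.continuous_deriv le_rfl).add (continuous_gradQ hH hq.continuous hp.continuous)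
  constructor
  · intro hvar
    obtain ⟨hHamQ, hHamP, hpT⟩ := eqOn_zero_and_eq_of_forall_variation hT hcQ hcP
      fun δq δp hδq hδp hδq0 => by
        have hvar := hvar δq δp hδq hδp hδq0
        rwa [hδS δq δp hδq hδp, hδq0, dotProduct_zero, sub_zero] at hvar
    exact ⟨fun t ht => ⟨sub_eq_zero.1 (hHamQ ht), eq_neg_of_add_eq_zero_left (hHamP ht)⟩, hpT⟩
  · rintro ⟨hHam, rfl⟩ δq δp hδq hδp hδq0
    rw [hδS δq δp hδq hδp, intervalIntegral_eq_zero_of_eqOn_Ioo hT.le fun t ht => ?_]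
    · simp [hδq0, dotProduct]
    · obtain ⟨hHamQ, hHamP⟩ := hHam t ht
      change deriv q t = gradP H t (q t) (p t) at hHamQ
      change deriv p t = -gradQ H t (q t) (p t) at hHamP
      simp [hHamQ, hHamP]

/-- Type II d'Alembert variational principle on a vector space.
For a C¹ curve `(q,p)` with `q(0) = q₀`, the condition `δS[q,p] = ⟨p₁, δq(T)⟩` for all C¹
partial variations `(δq, δp)` with `δq(0) = 0` holds if and only if Hamilton's equations
`q̇ = D_p H`, `ṗ = −D_q H` hold on `(0,T)` together with the natural boundary condition
`p(T) = p₁`. -/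
theorem typeII_dAlembert_variational_principle
    (n : ℕ) (T : ℝ) (hT : 0 < T)
    (H : ℝ → (Fin n → ℝ) → (Fin n → ℝ) → ℝ)
    (hH : ContDiff ℝ 1 (fun x : ℝ × (Fin n → ℝ) × (Fin n → ℝ) => H x.1 x.2.1 x.2.2))
    (q p : ℝ → (Fin n → ℝ)) (hq : ContDiff ℝ 1 q) (hp : ContDiff ℝ 1 p)
    (q₀ p₁ : Fin n → ℝ) (hq0 : q 0 = q₀) :
    (∀ δq δp : ℝ → (Fin n → ℝ), ContDiff ℝ 1 δq → ContDiff ℝ 1 δp → δq 0 = 0 →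
        deriv (fun ε : ℝ =>
            classicalAction n T H (fun t => q t + ε • δq t) (fun t => p t + ε • δp t)) 0
          = ∑ i, p₁ i * δq T i)
    ↔ ((∀ t ∈ Ioo (0 : ℝ) T,
          deriv q t = (fun i => fderiv ℝ (fun p' => H t (q t) p') (p t) (Pi.single i 1)) ∧
          deriv p t = (fun i => -fderiv ℝ (fun q' => H t q' (p t)) (q t) (Pi.single i 1)))
        ∧ p T = p₁) :=
  typeII_dAlembert_variational_principle_general n T hT H hH q p hq hp p₁
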